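/- Let G be a finite abelian group. Suppose there exist a tile Ω of G, an integer n ≥ 2, and pairwise distinct tiling complements T_0, T_1, …, T_{n-1} ∈ 𝒯_Ω such that: (i) there is no nonzero g ∈ G with T_i + g = T_i for all i = 0, …, n−1 (the T_i do not share a common period), and (ii) no element of the intersection ⋂_{i=0}^{n-1} 𝒯_{T_i} is periodic. Then for every integer m with m ≥ n and gcd(m, |G|) = 1, the group G × Z_m does not have the periodic tiling (PT) property. -/

import Mathlib

/-- `(Ω, T)` is a tiling pair of the abelian group `G`: every element of `G`
has a unique representation `ω + t` with `ω ∈ Ω`, `t ∈ T`. -/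
def IsTilingPair {G : Type*} [AddCommGroup G] (Ω T : Set G) : Prop :=
  ∀ g : G, ∃! p : G × G, p.1 ∈ Ω ∧ p.2 ∈ T ∧ p.1 + p.2 = g

/-- A nonempty subset `A` of `G` is periodic if `A + g = A` for some nonzero `g`. -/
def IsPeriodic {G : Type*} [AddCommGroup G] (A : Set G) : Prop :=
  A.Nonempty ∧ ∃ g : G, g ≠ 0 ∧ (fun a => a + g) '' A = A

/-- `Ω` is a tile of `G` if it has a tiling complement. -/
def IsTile {G : Type*} [AddCommGroup G] (Ω : Set G) : Prop :=
  ∃ T : Set G, IsTilingPair Ω T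

/-- `G` has the periodic tiling (PT) property: for every tiling pair `(Ω, T)`,
either `Ω` is periodic, or `T` can be replaced by a periodic tiling complement. -/
def HasPT (G : Type*) [AddCommGroup G] : Prop :=
  ∀ Ω T : Set G, IsTilingPair Ω T →
    IsPeriodic Ω ∨ ∃ T' : Set G, IsPeriodic T' ∧ IsTilingPair Ω T'

/-- A tile `Ω` is uniformly periodic if all its tiling complements share a
common nonzero period. -/
def UniformlyPeriodic {G : Type*} [AddCommGroup G] (Ω : Set G) : Prop :=
  ∃ g : G, g ≠ 0 ∧ ∀ T : Set G, IsTilingPair Ω T → (fun t => t + g) '' T = T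

/-- A tile `Ω` is dual uniformly periodic if there is a periodic tile `Ω'`
which is a tiling complement of every tiling complement of `Ω`. -/
def DualUniformlyPeriodic {G : Type*} [AddCommGroup G] (Ω : Set G) : Prop :=
  ∃ Ω' : Set G, IsPeriodic Ω' ∧ IsTile Ω' ∧
    ∀ T : Set G, IsTilingPair Ω T → IsTilingPair Ω' T

/-- `G` has the uniformly periodic tiling (UPT) property: every tile of `G`
is either uniformly periodic or dual uniformly periodic. -/
def HasUPT (G : Type*) [AddCommGroup G] : Prop :=
  ∀ Ω : Set G, IsTile Ω → UniformlyPeriodic Ω ∨ DualUniformlyPeriodic Ω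

/-!
Let `f : ℤ_m → Fin n` be onto with `f j = f 0` only for `j = 0` (this needs `2 ≤ n ≤ m`), and let
`Σ = ⋃ⱼ T_{f j} × {j} ⊆ G × ℤ_m`; then `(Σ, Ω × {0})` is a tiling pair.

A period `(g, d)` of `Σ` carries `T_{f j}` onto `T_{f (j + d)}`, so `m • g` is a common period of
the `T_i`; hence `m • g = 0`, so `g = 0` as `m` is prime to `|G|`, and then `T_{f d} = T_{f 0}`
forces `d = 0`. A periodic complement `B` of `Σ` has `|B| = |Ω|`, a divisor of `|G|`, so the order
of its period `(g, d)` divides `|G|`, which forces `d = 0`. By Tijdeman's dilation theorem `m • B` is again a complement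
of `Σ`, and `m • B = C × {0}` with `C` a common complement of all `T_i` of period `m • g ≠ 0`.

For a prime `p ∤ |B|`, Tijdeman's theorem comes from the Frobenius identity
`(∑_{b ∈ B} b) ^ p = ∑_{b ∈ B} p • b` in `𝔽_p[G]`: it gives
`1_A * 1_{p • B} = 1_G * 1_B ^ (p - 1) = |B| ^ (p - 1) • 1_G = 1_G`, so `(a, b) ↦ a + p • b` is
onto, hence bijective by counting.
-/

open AddMonoidAlgebra Function

section Tiling

variable {H : Type*} [AddCommGroup H] {A B : Set H}

theorem IsTilingPair.symm (h : IsTilingPair A B) : IsTilingPair B A := by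
  intro x
  obtain ⟨⟨a, b⟩, ⟨ha, hb, hab⟩, huniq⟩ := h x
  refine ⟨(b, a), ⟨hb, ha, by rwa [add_comm]⟩, fun ⟨b', a'⟩ ⟨hb', ha', hsum⟩ => ?_⟩
  exact congrArg Prod.swap (huniq (a', b') ⟨ha', hb', by rwa [add_comm]⟩)

theorem isTilingPair_iff_bijective :
    IsTilingPair A B ↔ Bijective fun q : A × B => (q.1 : H) + q.2 := by
  rw [bijective_iff_existsUnique]
  refine forall_congr' fun x => ⟨?_, ?_⟩
  · rintro ⟨⟨a, b⟩, ⟨ha, hb, hab⟩, huniq⟩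
    refine ⟨(⟨a, ha⟩, ⟨b, hb⟩), hab, fun q hq => ?_⟩
    have := huniq (q.1, q.2) ⟨q.1.2, q.2.2, hq⟩
    exact Prod.ext (Subtype.ext (congrArg Prod.fst this)) (Subtype.ext (congrArg Prod.snd this))
  · rintro ⟨⟨a, b⟩, hab, huniq⟩
    refine ⟨(a, b), ⟨a.2, b.2, hab⟩, fun ⟨a', b'⟩ ⟨ha', hb', hsum⟩ => ?_⟩
    exact congrArg (Prod.map Subtype.val Subtype.val) (huniq (⟨a', ha'⟩, ⟨b', hb'⟩) hsum)

theorem isTilingPair_image_of_bijective {φ : H → H}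
    (h : Bijective fun q : A × B => (q.1 : H) + φ q.2) : IsTilingPair A (φ '' B) := by
  let g : A × B → A × (φ '' B) := fun q => (q.1, ⟨φ q.2, Set.mem_image_of_mem φ q.2.2⟩)
  have hg : Bijective g :=
    ⟨fun q q' hqq' => h.1 (congrArg (fun r : A × (φ '' B) => (r.1 : H) + r.2) hqq'),
      fun ⟨a, ⟨_, b, hb, rfl⟩⟩ => ⟨(a, ⟨b, hb⟩), rfl⟩⟩
  exact isTilingPair_iff_bijective.2 ((Bijective.of_comp_iff _ hg).1 h)

theorem IsTilingPair.natCard_mul (h : IsTilingPair A B) :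
    Nat.card A * Nat.card B = Nat.card H := by
  rw [← Nat.card_prod]
  exact Nat.card_congr (Equiv.ofBijective _ (isTilingPair_iff_bijective.1 h))

theorem IsTilingPair.natCard_right_eq [Finite H] {B' : Set H} (h : IsTilingPair A B)
    (h' : IsTilingPair A B') : Nat.card B' = Nat.card B := by
  obtain ⟨⟨a, _⟩, ⟨ha, _⟩, _⟩ := h 0
  have : Nonempty A := ⟨⟨a, ha⟩⟩
  exact Nat.eq_of_mul_eq_mul_left Nat.card_pos (h'.natCard_mul.trans h.natCard_mul.symm)

end Tiling

section Dilation

variable {H : Type*} [AddCommGroup H] {A B : Set H}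

theorem IsTilingPair.sum_single_mul_sum_single (R : Type*) [CommSemiring R] [Fintype H]
    [Fintype A] [Fintype B] (h : IsTilingPair A B) :
    (∑ a : A, single (a : H) (1 : R)) * ∑ b : B, single (b : H) 1 = ∑ x : H, single x 1 := by
  simp only [Finset.sum_mul_sum, single_mul_single, mul_one]
  rw [← Fintype.sum_prod_type']
  exact Fintype.sum_bijective _ (isTilingPair_iff_bijective.1 h) _ _ fun _ => rfl

theorem sum_single_mul_sum_single_pow {R : Type*} [CommSemiring R] [Fintype H] [Fintype B]
    (k : ℕ) : (∑ x : H, single x (1 : R)) * (∑ b : B, single (b : H) 1) ^ k =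
      Fintype.card B ^ k • ∑ x : H, single x 1 := by
  have htranslate : ∀ y : H, (∑ x : H, single x (1 : R)) * single y 1 = ∑ x : H, single x 1 :=
    fun y => by
      simp only [Finset.sum_mul, single_mul_single, mul_one]
      exact Fintype.sum_equiv (Equiv.addRight y) _ _ fun _ => rfl
  induction k with
  | zero => simp
  | succ k ih =>
    rw [pow_succ, ← mul_assoc, ih, smul_mul_assoc, Finset.mul_sum]
    simp only [htranslate, Finset.sum_const, Finset.card_univ, smul_smul, pow_succ]

theorem IsTilingPair.image_nsmul_of_prime [Finite H] {p : ℕ} (hp : p.Prime)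
    (h : IsTilingPair A B) (hpB : ¬ p ∣ Nat.card B) : IsTilingPair A ((p • ·) '' B) := by
  classical
  have := Fintype.ofFinite H
  have := Fact.mk hp
  have : CharP (AddMonoidAlgebra (ZMod p) H) p := charP_of_injective_algebraMap' (ZMod p) p
  have hB : (Fintype.card B : ZMod p) ≠ 0 := by
    rwa [Ne, ZMod.natCast_eq_zero_iff, ← Nat.card_eq_fintype_card]
  have key : ∑ q : A × B, single ((q.1 : H) + p • (q.2 : H)) (1 : ZMod p) =
      ∑ x : H, single x 1 :=
    calc _ = (∑ a : A, single (a : H) (1 : ZMod p)) * (∑ b : B, single (b : H) 1) ^ p := by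
          simp only [sum_pow_char, single_pow, one_pow, Finset.sum_mul_sum, single_mul_single,
            mul_one]
          exact Fintype.sum_prod_type' fun (a : A) (b : B) => single ((a : H) + p • (b : H)) 1
      _ = (∑ x : H, single x 1) * (∑ b : B, single (b : H) 1) ^ (p - 1) := by
          rw [← h.sum_single_mul_sum_single (ZMod p), mul_assoc, ← pow_succ',
            Nat.sub_add_cancel hp.one_le]
      _ = ∑ x : H, single x 1 := by
          rw [sum_single_mul_sum_single_pow, ← Nat.cast_smul_eq_nsmul (ZMod p), Nat.cast_pow,
            ZMod.pow_card_sub_one_eq_one hB, one_smul]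
  have hsurj : Surjective fun q : A × B => (q.1 : H) + p • (q.2 : H) := by
    intro y
    by_contra hy
    push Not at hy
    have := congrArg (fun u => u.coeff y) key
    simp [coeff_sum, Finsupp.single_apply, hy] at this
  refine isTilingPair_image_of_bijective (hsurj.bijective_of_nat_card_le ?_)
  rw [Nat.card_prod, h.natCard_mul]

theorem IsTilingPair.image_nsmul_of_coprime [Finite H] {t : ℕ} (ht : 0 < t)
    (h : IsTilingPair A B) (htB : t.Coprime (Nat.card B)) : IsTilingPair A ((t • ·) '' B) := by
  induction t using Nat.recOnMul generalizing B with
  | zero => exact absurd ht (lt_irrefl 0)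
  | one => simpa using h
  | prime p hp => exact h.image_nsmul_of_prime hp ((Nat.Prime.coprime_iff_not_dvd hp).1 htB)
  | mul a b iha ihb =>
    have hb := ihb (Nat.pos_of_mul_pos_left ht) h (Nat.Coprime.coprime_mul_left htB)
    have ha := iha (Nat.pos_of_mul_pos_right ht) hb
      (by rw [h.natCard_right_eq hb]; exact Nat.Coprime.coprime_mul_right htB)
    simpa only [Set.image_image, mul_smul] using ha

end Dilation

section Periodic

variable {H : Type*} [AddCommGroup H] {S : Set H} {v : H}

theorem image_add_right_eq_self_iff : (· + v) '' S = S ↔ ∀ x, x + v ∈ S ↔ x ∈ S := by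
  rw [Set.image_add_right, Set.ext_iff]
  refine ⟨fun h x => ?_, fun h x => ?_⟩
  · simpa using (h (x + v)).symm
  · simpa using (h (x + -v)).symm

theorem add_zsmul_mem_iff (hS : (· + v) '' S = S) (z : ℤ) (x : H) : x + z • v ∈ S ↔ x ∈ S := by
  have hv := image_add_right_eq_self_iff.1 hS
  induction z using Int.induction_on generalizing x with
  | zero => simp
  | succ k ih => rw [add_zsmul, one_zsmul, ← add_assoc, hv]; exact ih x
  | pred k ih => rw [← hv, add_assoc, ← add_one_zsmul, sub_add_cancel]; exact ih x

theorem addOrderOf_dvd_natCard_of_image_add_eq (hS : (· + v) '' S = S) :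
    addOrderOf v ∣ Nat.card S := by
  let K := AddSubgroup.zmultiples v
  have hS' : S = QuotientAddGroup.mk ⁻¹' (QuotientAddGroup.mk '' S : Set (H ⧸ K)) := by
    refine (Set.subset_preimage_image _ _).antisymm ?_
    rintro y ⟨x, hx, hxy⟩
    obtain ⟨z, hz⟩ := AddSubgroup.mem_zmultiples_iff.1 (QuotientAddGroup.eq.1 hxy)
    rw [← add_neg_cancel_left x y, ← hz]
    exact (add_zsmul_mem_iff hS z x).2 hx
  rw [hS', Nat.card_congr (QuotientAddGroup.preimageMkEquivAddSubgroupProdSet _ _),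
    Nat.card_prod, Nat.card_zmultiples]
  exact dvd_mul_right _ _

end Periodic

section Stack

variable {G K : Type*} [AddCommGroup G] [AddCommGroup K]

def stack (S : K → Set G) : Set (G × K) := {x | x.1 ∈ S x.2}

theorem isTilingPair_stack_prod_zero_iff {S : K → Set G} {C : Set G} :
    IsTilingPair (stack S) (C ×ˢ {0}) ↔ ∀ k, IsTilingPair (S k) C := by
  constructor
  · intro h k x
    obtain ⟨⟨⟨t, k'⟩, ⟨c, z⟩⟩, ⟨ht, ⟨hc, rfl : z = 0⟩, hsum⟩, huniq⟩ := h (x, k)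
    obtain ⟨htc, rfl : k' = k⟩ := by simpa [Prod.ext_iff] using hsum
    refine ⟨(t, c), ⟨ht, hc, htc⟩, fun ⟨t', c'⟩ ⟨ht', hc', htc'⟩ => ?_⟩
    have := huniq ((t', k'), (c', 0)) ⟨ht', ⟨hc', rfl⟩, by simp [htc']⟩
    simp_all [Prod.ext_iff]
  · rintro h ⟨x, k⟩
    obtain ⟨⟨t, c⟩, ⟨ht, hc, htc⟩, huniq⟩ := h k x
    refine ⟨((t, k), (c, 0)), ⟨ht, ⟨hc, rfl⟩, by simp [htc]⟩, ?_⟩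
    rintro ⟨⟨t', k'⟩, ⟨c', z⟩⟩ ⟨ht', ⟨hc', rfl : z = 0⟩, hsum⟩
    obtain ⟨htc', rfl : k' = k⟩ := by simpa [Prod.ext_iff] using hsum
    have := huniq (t', c') ⟨ht', hc', htc'⟩
    simp_all [Prod.ext_iff]

variable {S : K → Set G}

theorem eq_zero_and_shift_eq_of_image_add_stack_eq (hcop : (Nat.card G).Coprime (Nat.card K))
    (hS : ¬ ∃ g : G, g ≠ 0 ∧ ∀ k, (· + g) '' S k = S k) {g : G} {d : K}
    (h : (· + (g, d)) '' stack S = stack S) : g = 0 ∧ ∀ k, S (k + d) = S k := by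
  have hmem (z : ℤ) (x : G) (k : K) : x + z • g ∈ S (k + z • d) ↔ x ∈ S k :=
    add_zsmul_mem_iff h z (x, k)
  have hg : Nat.card K • g = 0 := by
    by_contra hne
    refine hS ⟨_, hne, fun k => image_add_right_eq_self_iff.2 fun x => ?_⟩
    simpa using hmem (Nat.card K) x k
  obtain rfl : g = 0 := (Nat.Coprime.nsmul_right_bijective hcop).1 (by simpa using hg)
  exact ⟨rfl, fun k => Set.ext fun x => by simpa using hmem 1 x k⟩

theorem exists_isPeriodic_common_complement [Finite G] [Finite K]
    (hcop : (Nat.card G).Coprime (Nat.card K)) {Ω : Set G} (hΩ : ∀ k, IsTilingPair (S k) Ω)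
    {B : Set (G × K)} (hB : IsTilingPair (stack S) B) (hBper : IsPeriodic B) :
    ∃ C : Set G, IsPeriodic C ∧ ∀ k, IsTilingPair (S k) C := by
  obtain ⟨hBne, ⟨g, d⟩, hgd, hBinv⟩ := hBper
  have hBG : Nat.card B ∣ Nat.card G := by
    rw [(isTilingPair_stack_prod_zero_iff.2 hΩ).natCard_right_eq hB,
      Nat.card_congr (Equiv.Set.prod _ _), Nat.card_prod, Nat.card_unique (α := ({0} : Set K)),
      mul_one]
    exact Dvd.intro _ (hΩ 0).symm.natCard_mul
  obtain rfl : d = 0 := by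
    have h1 : Nat.card G • (g, d) = 0 := addOrderOf_dvd_iff_nsmul_eq_zero.1
      ((addOrderOf_dvd_natCard_of_image_add_eq hBinv).trans hBG)
    exact (Nat.Coprime.nsmul_right_bijective hcop.symm).1 (by simpa using congrArg Prod.snd h1)
  set m := Nat.card K
  let C : Set G := (m • ·) '' (Prod.fst '' B)
  have hdil : IsTilingPair (stack S) (C ×ˢ {0}) := by
    convert hB.image_nsmul_of_coprime Nat.card_pos (hcop.symm.coprime_dvd_right hBG) using 1
    ext ⟨x, k⟩
    simp [C, m, Prod.ext_iff, eq_comm, ← and_assoc]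
  have hCinv : (· + m • g) '' C = C := by
    simp only [C, Set.image_image, ← smul_add]
    conv_rhs => rw [← hBinv, Set.image_image]
    rfl
  refine ⟨C, ⟨(hBne.image _).image _, m • g, ?_, hCinv⟩,
    isTilingPair_stack_prod_zero_iff.1 hdil⟩
  intro hmg
  exact hgd (Prod.ext ((Nat.Coprime.nsmul_right_bijective hcop).1 (by simpa using hmg)) rfl)

end Stack

theorem ZMod.exists_surjective_fin_of_le {n m : ℕ} (hn : 2 ≤ n) (hm : n ≤ m) :
    ∃ f : ZMod m → Fin n, Surjective f ∧ ∀ j, f j = f 0 → j = 0 := by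
  have : NeZero m := ⟨by omega⟩
  refine ⟨fun j => ⟨min j.val (n - 1), by omega⟩, fun i => ⟨i.val, Fin.ext ?_⟩, fun j hj => ?_⟩
  · simp [ZMod.val_cast_of_lt (by omega : i.val < m)]
    omega
  · simp [Fin.ext_iff] at hj
    exact hj.resolve_right (by omega)

/-- If a tile `Ω` of `G` has distinct tiling complements `T_0, …, T_{n-1}`
with no common nonzero period, and no common tiling complement of the `T_i`
is periodic, then `G × Z_m` does not have the PT property for every `m ≥ n`
with `gcd(m, |G|) = 1`. -/
theorem not_hasPT_prod_of_complements (G : Type*) [AddCommGroup G] [Fintype G]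
    (Ω : Set G) (n : ℕ) (hn : 2 ≤ n) (T : Fin n → Set G)
    (hT : ∀ i, IsTilingPair Ω (T i))
    (hdist : Function.Injective T)
    (hnoper : ¬ ∃ g : G, g ≠ 0 ∧ ∀ i, (fun t => t + g) '' T i = T i)
    (hinter : ∀ Ω' : Set G, (∀ i, IsTilingPair (T i) Ω') → ¬ IsPeriodic Ω')
    (m : ℕ) (hm : n ≤ m) (hgcd : Nat.gcd m (Fintype.card G) = 1) :
    ¬ HasPT (G × ZMod m) := by
  intro hPT
  have : NeZero m := ⟨by omega⟩
  have hcop : (Nat.card G).Coprime (Nat.card (ZMod m)) := by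
    rw [Nat.card_zmod, Nat.card_eq_fintype_card]
    exact Nat.coprime_comm.1 hgcd
  obtain ⟨f, hf, hf0⟩ := ZMod.exists_surjective_fin_of_le hn hm
  have hΩ (j : ZMod m) : IsTilingPair (T (f j)) Ω := (hT (f j)).symm
  rcases hPT _ _ (isTilingPair_stack_prod_zero_iff.2 hΩ) with
    ⟨-, ⟨g, d⟩, hgd, hper⟩ | ⟨B, hBper, hB⟩
  · obtain ⟨rfl, hshift⟩ := eq_zero_and_shift_eq_of_image_add_stack_eq hcop
      (fun ⟨g, hg, h⟩ => hnoper ⟨g, hg, hf.forall.2 h⟩) hper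
    have hd : d = 0 := hf0 d (hdist (by simpa using hshift 0))
    exact hgd (Prod.ext rfl hd)
  · obtain ⟨C, hC, hCtile⟩ := exists_isPeriodic_common_complement hcop hΩ hB hBper
    exact hinter C (hf.forall.2 hCtile) hC
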